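/- Integrality of the rounding problem (the linear relaxation attains its optimum at integer points): let F be a finite set of facilities, M ⊆ F × F a movement set with (i,i) ∉ M for all i ∈ F, X^Rel : M → ℝ with X^Rel ≥ 0, and ĉ : M → ℝ any cost vector. For every real-valued X̃ : M → ℝ satisfying the rounding constraints with respect to X^Rel (entrywise bounds ⌊X^Rel_{i,j}⌋ ≤ X̃_{i,j} ≤ ⌈X^Rel_{i,j}⌉, out-sum bounds ⌊Z^S_i⌋ ≤ ∑_{j : (i,j) ∈ M} X̃_{i,j} ≤ ⌈Z^S_i⌉, in-sum bounds ⌊Z^R_i⌋ ≤ ∑_{j : (j,i) ∈ M} X̃_{j,i} ≤ ⌈Z^R_i⌉, and balance bounds ⌊B_i⌋ ≤ ∑_{j : (j,i) ∈ M} X̃_{j,i} − ∑_{j : (i,j) ∈ M} X̃_{i,j} ≤ ⌈B_i⌉), there exists an integer feasible rounding X : M → ℤ of X^Rel with ∑_{(i,j) ∈ M} ĉ_{i,j} X_{i,j} ≤ ∑_{(i,j) ∈ M} ĉ_{i,j} X̃_{i,j}. -/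

import Mathlib

open Finset

noncomputable section

variable {F : Type*} [Fintype F] [DecidableEq F]

/-- Total (relaxed) amount sent by facility `i`. -/
def ZS (M : Finset (F × F)) (XRel : F → F → ℝ) (i : F) : ℝ :=
  ∑ j ∈ univ.filter (fun j => (i, j) ∈ M), XRel i j

/-- Total (relaxed) amount received by facility `i`. -/
def ZR (M : Finset (F × F)) (XRel : F → F → ℝ) (i : F) : ℝ :=
  ∑ j ∈ univ.filter (fun j => (j, i) ∈ M), XRel j i

/-- Net balance (received minus sent) of facility `i`. -/
def Bal (M : Finset (F × F)) (XRel : F → F → ℝ) (i : F) : ℝ :=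
  ZR M XRel i - ZS M XRel i

/-- `X : M → ℤ` is a feasible rounding of the relaxed values `XRel`: entrywise bounds,
out-sum bounds, in-sum bounds, and balance bounds. -/
def FeasibleRounding (M : Finset (F × F)) (XRel : F → F → ℝ) (X : F → F → ℤ) : Prop :=
  (∀ m ∈ M, ⌊XRel m.1 m.2⌋ ≤ X m.1 m.2 ∧ X m.1 m.2 ≤ ⌈XRel m.1 m.2⌉) ∧
  (∀ i : F, ⌊ZS M XRel i⌋ ≤ (∑ j ∈ univ.filter (fun j => (i, j) ∈ M), X i j) ∧
    (∑ j ∈ univ.filter (fun j => (i, j) ∈ M), X i j) ≤ ⌈ZS M XRel i⌉) ∧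
  (∀ i : F, ⌊ZR M XRel i⌋ ≤ (∑ j ∈ univ.filter (fun j => (j, i) ∈ M), X j i) ∧
    (∑ j ∈ univ.filter (fun j => (j, i) ∈ M), X j i) ≤ ⌈ZR M XRel i⌉) ∧
  (∀ i : F, ⌊Bal M XRel i⌋ ≤ (∑ j ∈ univ.filter (fun j => (j, i) ∈ M), X j i)
        - (∑ j ∈ univ.filter (fun j => (i, j) ∈ M), X i j) ∧
    (∑ j ∈ univ.filter (fun j => (j, i) ∈ M), X j i)
        - (∑ j ∈ univ.filter (fun j => (i, j) ∈ M), X i j) ≤ ⌈Bal M XRel i⌉)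

/-- Real-valued feasibility for the rounding constraints with respect to `XRel`. -/
def RealFeasibleRounding (M : Finset (F × F)) (XRel : F → F → ℝ) (Xt : F → F → ℝ) : Prop :=
  (∀ m ∈ M, (⌊XRel m.1 m.2⌋ : ℝ) ≤ Xt m.1 m.2 ∧ Xt m.1 m.2 ≤ (⌈XRel m.1 m.2⌉ : ℝ)) ∧
  (∀ i : F, (⌊ZS M XRel i⌋ : ℝ) ≤ (∑ j ∈ univ.filter (fun j => (i, j) ∈ M), Xt i j) ∧
    (∑ j ∈ univ.filter (fun j => (i, j) ∈ M), Xt i j) ≤ (⌈ZS M XRel i⌉ : ℝ)) ∧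
  (∀ i : F, (⌊ZR M XRel i⌋ : ℝ) ≤ (∑ j ∈ univ.filter (fun j => (j, i) ∈ M), Xt j i) ∧
    (∑ j ∈ univ.filter (fun j => (j, i) ∈ M), Xt j i) ≤ (⌈ZR M XRel i⌉ : ℝ)) ∧
  (∀ i : F, (⌊Bal M XRel i⌋ : ℝ) ≤ (∑ j ∈ univ.filter (fun j => (j, i) ∈ M), Xt j i)
        - (∑ j ∈ univ.filter (fun j => (i, j) ∈ M), Xt i j) ∧
    (∑ j ∈ univ.filter (fun j => (j, i) ∈ M), Xt j i)
        - (∑ j ∈ univ.filter (fun j => (i, j) ∈ M), Xt i j) ≤ (⌈Bal M XRel i⌉ : ℝ))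

/-! The rounding problem is a circulation problem in disguise. Give every facility `i` a hub, a
sending and a receiving node, and add one common sink; the movements `(i, j)` are arcs from the
sending node of `i` to the receiving node of `j`, and `Z^S_i`, `Z^R_i`, `B_i` are the flows on the
arcs hub → sending node, receiving node → hub and hub → sink. Every constraint then bounds a single
arc flow `y` by `⌊y⌋` and `⌈y⌉`, and the theorem follows from integrality of circulations.

If a real circulation `f` has fractional arcs, every node touching one touches at least two
(otherwise its net flow would not be an integer), so the fractional arcs are at least as many as the
nodes they touch. Since the incidence rows of these nodes sum to zero, the fractional arcs carry a
nonzero circulation `d`. Pushing `f` along `d` or `-d`, whichever does not increase the cost, until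
the first fractional arc becomes integral keeps every arc in its rounding interval and strictly
decreases the number of fractional arcs. -/

section Scalar

def exitTime (q r : ℝ) : ℝ := ((if 0 < r then ⌈q⌉ else ⌊q⌋ : ℤ) - q) / r

lemma exitTime_nonneg (q r : ℝ) : 0 ≤ exitTime q r := by
  unfold exitTime
  split_ifs with hr
  · exact div_nonneg (by linarith [Int.le_ceil q]) hr.le
  · exact div_nonneg_of_nonpos (by linarith [Int.floor_le q]) (not_lt.1 hr)

lemma add_exitTime_mul (q : ℝ) {r : ℝ} (hr : r ≠ 0) :
    q + exitTime q r * r = ((if 0 < r then ⌈q⌉ else ⌊q⌋ : ℤ) : ℝ) := by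
  rw [exitTime, div_mul_cancel₀ _ hr]
  ring

lemma floor_le_add_mul_and_le_ceil {q r t : ℝ} (ht₀ : 0 ≤ t) (ht : t ≤ exitTime q r) :
    (⌊q⌋ : ℝ) ≤ q + t * r ∧ q + t * r ≤ ⌈q⌉ := by
  have hfl := Int.floor_le q
  have hce := Int.le_ceil q
  rcases lt_trichotomy r 0 with hr | rfl | hr
  · have hexit := add_exitTime_mul q hr.ne
    rw [if_neg hr.not_gt] at hexit
    have := mul_le_mul_of_nonpos_right ht hr.le
    have := mul_nonpos_of_nonneg_of_nonpos ht₀ hr.le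
    constructor <;> linarith
  · simp [hfl, hce]
  · have hexit := add_exitTime_mul q hr.ne'
    rw [if_pos hr] at hexit
    have := mul_le_mul_of_nonneg_right ht hr.le
    have := mul_nonneg ht₀ hr.le
    constructor <;> linarith

lemma floor_le_and_le_ceil_trans {a b : ℝ} {n : ℤ} (hab : (⌊a⌋ : ℝ) ≤ b ∧ b ≤ ⌈a⌉)
    (hn : ⌊b⌋ ≤ n ∧ n ≤ ⌈b⌉) : ⌊a⌋ ≤ n ∧ n ≤ ⌈a⌉ :=
  ⟨(Int.le_floor.2 hab.1).trans hn.1, hn.2.trans (Int.ceil_le.2 hab.2)⟩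

end Scalar

section Circulation

variable {V E : Type*} [DecidableEq V] (tail head : E → V)

def incidence (v : V) (e : E) : ℤ :=
  (if head e = v then 1 else 0) - (if tail e = v then 1 else 0)

variable {tail head}

lemma incidence_eq_zero_of_ne {v : V} {e : E} (ht : tail e ≠ v) (hh : head e ≠ v) :
    incidence tail head v e = 0 := by
  simp [incidence, ht, hh]

lemma incidence_eq_one_or_neg_one {v : V} {e : E} (h : incidence tail head v e ≠ 0) :
    incidence tail head v e = 1 ∨ incidence tail head v e = -1 := by
  unfold incidence at h ⊢
  split_ifs at h ⊢ <;> simp_all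

lemma card_touched_le [Fintype V] {S : Finset E}
    (hdeg : ∀ v, (∃ e ∈ S, incidence tail head v e ≠ 0) →
      2 ≤ #{e ∈ S | incidence tail head v e ≠ 0}) :
    #{v | ∃ e ∈ S, incidence tail head v e ≠ 0} ≤ #S := by
  have := card_mul_le_card_mul (fun v e => incidence tail head v e ≠ 0) (m := 2) (n := 2)
    (s := {v | ∃ e ∈ S, incidence tail head v e ≠ 0}) (t := S)
    (fun v hv => hdeg v (mem_filter.1 hv).2) fun e _ => by
      refine (card_le_card fun v hv => ?_).trans (card_le_two (a := tail e) (b := head e))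
      by_contra hne
      simp only [mem_insert, mem_singleton, not_or] at hne
      exact ((mem_bipartiteBelow _).1 hv).2 (incidence_eq_zero_of_ne (Ne.symm hne.1) (Ne.symm hne.2))
  omega

variable [Fintype E] (tail head)

def netFlow {R : Type*} [AddCommGroup R] (g : E → R) (v : V) : R :=
  ∑ e, incidence tail head v e • g e

def IsCirculation {R : Type*} [AddCommGroup R] (g : E → R) : Prop :=
  ∀ v, netFlow tail head g v = 0

def fracArcs (f : E → ℝ) : Finset E := {e | Int.fract (f e) ≠ 0}

variable {tail head}

lemma sum_netFlow [Fintype V] {R : Type*} [AddCommGroup R] (g : E → R) :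
    ∑ v, netFlow tail head g v = 0 := by
  simp only [netFlow, incidence]
  rw [sum_comm]
  simp [sub_smul, sum_sub_distrib]

lemma isCirculation_of_forall_ne [Fintype V] {R : Type*} [AddCommGroup R] {g : E → R} (v₀ : V)
    (h : ∀ v ≠ v₀, netFlow tail head g v = 0) : IsCirculation tail head g := by
  intro v
  obtain rfl | hv := eq_or_ne v v₀
  · have hsum := sum_netFlow (tail := tail) (head := head) g
    rwa [← add_sum_erase _ _ (mem_univ v), sum_eq_zero fun w hw => h w (ne_of_mem_erase hw),
      add_zero] at hsum
  · exact h v hv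

lemma IsCirculation.neg {g : E → ℝ} (hg : IsCirculation tail head g) :
    IsCirculation tail head (-g) := fun v => by
  simpa [netFlow] using hg v

lemma IsCirculation.add_smul {f d : E → ℝ} (hf : IsCirculation tail head f)
    (hd : IsCirculation tail head d) (t : ℝ) : IsCirculation tail head (f + t • d) := fun v => by
  have hlin : netFlow tail head (f + t • d) v =
      netFlow tail head f v + t * netFlow tail head d v := by
    simp [netFlow, sum_add_distrib, mul_sum, mul_left_comm]
  rw [hlin, hf v, hd v, mul_zero, add_zero]

lemma netFlow_intCast (g : E → ℤ) (v : V) :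
    netFlow tail head (fun e => (g e : ℝ)) v = netFlow tail head g v := by
  simp [netFlow]

-- The touched nodes are at most as many as the arcs of `S`, and their incidence rows sum to zero,
-- so dropping one of them leaves fewer equations than unknowns.
lemma exists_isCirculation_ne_zero_of_two_le_card [Fintype V] [DecidableEq E] {S : Finset E}
    (hS : S.Nonempty)
    (hdeg : ∀ v, (∃ e ∈ S, incidence tail head v e ≠ 0) →
      2 ≤ #{e ∈ S | incidence tail head v e ≠ 0}) :
    ∃ d : E → ℝ, d ≠ 0 ∧ (∀ e ∉ S, d e = 0) ∧ IsCirculation tail head d := by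
  set W : Finset V := {v | ∃ e ∈ S, incidence tail head v e ≠ 0}
  obtain ⟨v₀, hv₀⟩ : ∃ v₀, #(W.erase v₀) < #S := by
    obtain hW | ⟨v₀, hv₀⟩ := W.eq_empty_or_nonempty
    · exact ⟨tail hS.choose, by simp [hW, hS.card_pos]⟩
    · refine ⟨v₀, ?_⟩
      have : #W ≤ #S := card_touched_le hdeg
      have := card_pos.2 ⟨v₀, hv₀⟩
      rw [card_erase_of_mem hv₀]
      omega
  let L : (E → ℝ) →ₗ[ℝ] ((W.erase v₀ → ℝ) × ((Sᶜ : Finset E) → ℝ)) :=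
    (LinearMap.pi fun v : W.erase v₀ =>
      ∑ e, (incidence tail head v e : ℝ) • LinearMap.proj e).prod
    (LinearMap.funLeft ℝ ℝ Subtype.val)
  have hdim : Module.finrank ℝ ((W.erase v₀ → ℝ) × ((Sᶜ : Finset E) → ℝ)) <
      Module.finrank ℝ (E → ℝ) := by
    simp only [Module.finrank_prod, Module.finrank_fintype_fun_eq_card, Fintype.card_coe,
      card_compl]
    have := S.card_le_univ
    omega
  obtain ⟨d, hdL, hd0⟩ :=
    Submodule.exists_mem_ne_zero_of_ne_bot (LinearMap.ker_ne_bot_of_finrank_lt hdim)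
  have hL : L d = 0 := LinearMap.mem_ker.1 hdL
  have hoff : ∀ e ∉ S, d e = 0 := fun e he => by
    simpa [L] using congrArg (fun p => p.2 ⟨e, mem_compl.2 he⟩) hL
  refine ⟨d, hd0, hoff, isCirculation_of_forall_ne v₀ fun v hv => ?_⟩
  by_cases hvW : v ∈ W
  · have := congrArg (fun p => p.1 ⟨v, mem_erase.2 ⟨hv, hvW⟩⟩) hL
    simpa [L, netFlow, Int.cast_smul_eq_zsmul] using this
  · refine sum_eq_zero fun e _ => ?_
    by_cases he : e ∈ S
    · have : incidence tail head v e = 0 := by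
        by_contra h
        exact hvW (mem_filter.2 ⟨mem_univ v, e, he, h⟩)
      simp [this]
    · simp [hoff e he]

lemma two_le_card_of_isCirculation [DecidableEq E] {f : E → ℝ} (hf : IsCirculation tail head f)
    {v : V} (hv : ∃ e ∈ fracArcs f, incidence tail head v e ≠ 0) :
    2 ≤ #{e ∈ fracArcs f | incidence tail head v e ≠ 0} := by
  by_contra hlt
  obtain ⟨e₀, he₀⟩ : ∃ e₀, {e ∈ fracArcs f | incidence tail head v e ≠ 0} = {e₀} := by
    refine card_eq_one.1 (le_antisymm (by omega) (card_pos.2 ?_))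
    obtain ⟨e, he, hve⟩ := hv
    exact ⟨e, mem_filter.2 ⟨he, hve⟩⟩
  have hmem : e₀ ∈ fracArcs f ∧ incidence tail head v e₀ ≠ 0 :=
    mem_filter.1 (he₀ ▸ mem_singleton_self e₀)
  have hrest :
      ∑ e ∈ univ.erase e₀, incidence tail head v e • f e ∈ (Int.castAddHom ℝ).range := by
    refine AddSubgroup.sum_mem _ fun e he => ?_
    by_cases hfe : e ∈ fracArcs f
    · have : incidence tail head v e = 0 := by
        by_contra h
        exact ne_of_mem_erase he (mem_singleton.1 (he₀ ▸ mem_filter.2 ⟨hfe, h⟩))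
      simp [this]
    · obtain ⟨n, hn⟩ := Int.fract_eq_zero_iff.1 (by simpa [fracArcs] using hfe)
      exact AddSubgroup.zsmul_mem _ (AddMonoidHom.mem_range.2 ⟨n, hn⟩) _
  have hnet := hf v
  rw [netFlow, ← add_sum_erase _ _ (mem_univ e₀), add_eq_zero_iff_eq_neg] at hnet
  obtain ⟨n, hn⟩ : incidence tail head v e₀ • f e₀ ∈ (Int.castAddHom ℝ).range :=
    hnet ▸ neg_mem hrest
  apply (mem_filter.1 hmem.1).2
  rw [Int.fract_eq_zero_iff]
  rcases incidence_eq_one_or_neg_one hmem.2 with h | h <;> rw [h] at hn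
  · exact ⟨n, by simpa using hn⟩
  · exact ⟨-n, by simpa [neg_eq_iff_eq_neg] using hn⟩

lemma exists_int_eq_of_fracArcs_eq_empty {f : E → ℝ} (hf : IsCirculation tail head f)
    (h : fracArcs f = ∅) :
    ∃ g : E → ℤ, IsCirculation tail head g ∧ ∀ e, (g e : ℝ) = f e := by
  have hg : ∀ e, (⌊f e⌋ : ℝ) = f e := fun e => by
    have : Int.fract (f e) = 0 := by simpa [fracArcs] using eq_empty_iff_forall_notMem.1 h e
    rw [← Int.self_sub_floor, sub_eq_zero] at this
    exact this.symm
  refine ⟨fun e => ⌊f e⌋, fun v => ?_, hg⟩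
  have := hf v
  rw [← funext hg, netFlow_intCast] at this
  exact_mod_cast this

lemma exists_isCirculation_lt_card_fracArcs [Fintype V] [DecidableEq E] {f : E → ℝ}
    (hf : IsCirculation tail head f) (c : E → ℝ) (hfrac : (fracArcs f).Nonempty) :
    ∃ f' : E → ℝ, IsCirculation tail head f' ∧ (∀ e, (⌊f e⌋ : ℝ) ≤ f' e ∧ f' e ≤ ⌈f e⌉) ∧
      ∑ e, c e * f' e ≤ ∑ e, c e * f e ∧ #(fracArcs f') < #(fracArcs f) := by
  obtain ⟨d, hd0, hdS, hd, hcd⟩ : ∃ d : E → ℝ, d ≠ 0 ∧ (∀ e ∉ fracArcs f, d e = 0) ∧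
      IsCirculation tail head d ∧ ∑ e, c e * d e ≤ 0 := by
    obtain ⟨d, hd0, hdS, hd⟩ := exists_isCirculation_ne_zero_of_two_le_card hfrac
      fun v hv => two_le_card_of_isCirculation hf hv
    rcases le_total (∑ e, c e * d e) 0 with hcd | hcd
    · exact ⟨d, hd0, hdS, hd, hcd⟩
    · exact ⟨-d, neg_ne_zero.2 hd0, fun e he => by simp [hdS e he], hd.neg, by simpa using hcd⟩
  obtain ⟨e₀, he₀, hmin⟩ := exists_min_image {e | d e ≠ 0} (fun e => exitTime (f e) (d e))
    (by simpa [Finset.Nonempty, Function.ne_iff] using hd0)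
  have hd₀ : d e₀ ≠ 0 := (mem_filter.1 he₀).2
  let t := exitTime (f e₀) (d e₀)
  have ht : 0 ≤ t := exitTime_nonneg _ _
  refine ⟨f + t • d, hf.add_smul hd t, fun e => ?_, ?_, card_lt_card ?_⟩
  · by_cases hde : d e = 0
    · simp [hde, Int.floor_le, Int.le_ceil]
    · simpa using floor_le_add_mul_and_le_ceil ht (hmin e (mem_filter.2 ⟨mem_univ e, hde⟩))
  · have : ∑ e, c e * (f + t • d) e = ∑ e, c e * f e + t * ∑ e, c e * d e := by
      simp [mul_add, sum_add_distrib, mul_sum, mul_left_comm]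
    rw [this]
    linarith [mul_nonpos_of_nonneg_of_nonpos ht hcd]
  · refine (ssubset_iff_of_subset fun e he => ?_).2 ⟨e₀, ?_, ?_⟩
    · by_cases hde : d e = 0
      · simpa [fracArcs, hde] using he
      · by_contra h
        exact hde (hdS e h)
    · by_contra h
      exact hd₀ (hdS e₀ h)
    · simp only [fracArcs, mem_filter, Pi.add_apply, Pi.smul_apply, smul_eq_mul, not_and,
        not_not]
      intro
      rw [add_exitTime_mul _ hd₀, Int.fract_intCast]

theorem exists_int_isCirculation_le [Fintype V] [DecidableEq E] (c : E → ℝ) {f : E → ℝ}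
    (hf : IsCirculation tail head f) :
    ∃ g : E → ℤ, IsCirculation tail head g ∧ (∀ e, ⌊f e⌋ ≤ g e ∧ g e ≤ ⌈f e⌉) ∧
      ∑ e, c e * g e ≤ ∑ e, c e * f e := by
  induction hn : #(fracArcs f) using Nat.strong_induction_on generalizing f with
  | _ n ih =>
  obtain h | h := (fracArcs f).eq_empty_or_nonempty
  · obtain ⟨g, hg, hgf⟩ := exists_int_eq_of_fracArcs_eq_empty hf h
    refine ⟨g, hg, fun e => ?_, by simp [hgf]⟩
    simp [← hgf]
  · obtain ⟨f', hf', hbox, hcost, hlt⟩ := exists_isCirculation_lt_card_fracArcs hf c h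
    obtain ⟨g, hg, hgbox, hgcost⟩ := ih _ (hn ▸ hlt) hf' rfl
    exact ⟨g, hg, fun e => floor_le_and_le_ceil_trans (hbox e) (hgbox e), hgcost.trans hcost⟩

end Circulation

namespace RoundingNetwork

abbrev Node (F : Type*) := Option (F ⊕ F ⊕ F)

abbrev Arc (F : Type*) := (F × F) ⊕ F ⊕ F ⊕ F

-- `some (.inl i)`, `some (.inr (.inl i))` and `some (.inr (.inr i))` are the hub, the sending and
-- the receiving node of facility `i`; `none` is the sink.
def tail : Arc F → Node F
  | .inl (i, _) => some (.inr (.inl i))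
  | .inr (.inl i) => some (.inl i)
  | .inr (.inr (.inl i)) => some (.inr (.inr i))
  | .inr (.inr (.inr i)) => some (.inl i)

def head : Arc F → Node F
  | .inl (_, j) => some (.inr (.inr j))
  | .inr (.inl i) => some (.inr (.inl i))
  | .inr (.inr (.inl i)) => some (.inl i)
  | .inr (.inr (.inr _)) => none

section NetFlow

variable {R : Type*} [AddCommGroup R] (g : Arc F → R) (i : F)

lemma netFlow_send :
    netFlow tail head g (some (.inr (.inl i))) = g (.inr (.inl i)) - ∑ j, g (.inl (i, j)) := by
  simp only [netFlow, incidence, Fintype.sum_sum_type, Fintype.sum_prod_type, tail, head,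
    sub_smul, sum_sub_distrib]
  rw [Fintype.sum_eq_single i fun _ _ => by simp]
  simp

lemma netFlow_recv :
    netFlow tail head g (some (.inr (.inr i))) = ∑ j, g (.inl (j, i)) - g (.inr (.inr (.inl i))) := by
  simp [netFlow, incidence, tail, head, Fintype.sum_prod_type, sub_smul, sum_sub_distrib]

lemma netFlow_hub :
    netFlow tail head g (some (.inl i)) =
      g (.inr (.inr (.inl i))) - g (.inr (.inl i)) - g (.inr (.inr (.inr i))) := by
  simp [netFlow, incidence, tail, head]
  abel

end NetFlow

variable (M : Finset (F × F))

-- Pairs outside `M` are arcs too, but with flow `0`, which pins their rounded flow to `0`.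
def flow (x : F → F → ℝ) : Arc F → ℝ
  | .inl (i, j) => if (i, j) ∈ M then x i j else 0
  | .inr (.inl i) => ZS M x i
  | .inr (.inr (.inl i)) => ZR M x i
  | .inr (.inr (.inr i)) => Bal M x i

def cost (c : F → F → ℝ) : Arc F → ℝ
  | .inl (i, j) => if (i, j) ∈ M then c i j else 0
  | .inr _ => 0

lemma isCirculation_flow (x : F → F → ℝ) : IsCirculation tail head (flow M x) := by
  refine isCirculation_of_forall_ne none fun v hv => ?_
  obtain _ | i | i | i := v
  · exact absurd rfl hv
  · simp [netFlow_hub, flow, Bal]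
  · simp [netFlow_send, flow, ZS, sum_filter]
  · simp [netFlow_recv, flow, ZR, sum_filter]

lemma sum_cost_mul_flow (c x : F → F → ℝ) :
    ∑ a, cost M c a * flow M x a = ∑ m ∈ M, c m.1 m.2 * x m.1 m.2 := by
  simp [cost, flow, sum_ite_mem]

lemma sum_cost_mul_intCast (c : F → F → ℝ) (g : Arc F → ℤ) :
    ∑ a, cost M c a * (g a : ℝ) = ∑ m ∈ M, c m.1 m.2 * (g (.inl m) : ℝ) := by
  simp [cost, sum_ite_mem]

variable {M}

lemma feasibleRounding_of_isCirculation {XRel Xt : F → F → ℝ}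
    (hXt : RealFeasibleRounding M XRel Xt) {g : Arc F → ℤ} (hg : IsCirculation tail head g)
    (hbox : ∀ a, ⌊flow M Xt a⌋ ≤ g a ∧ g a ≤ ⌈flow M Xt a⌉) :
    FeasibleRounding M XRel fun i j => g (.inl (i, j)) := by
  obtain ⟨hedge, hout, hin, hbal⟩ := hXt
  have hoff : ∀ i j, (i, j) ∉ M → g (.inl (i, j)) = 0 := fun i j h => by
    have := hbox (.inl (i, j))
    simp only [flow, h, if_false, Int.floor_zero, Int.ceil_zero] at this
    omega
  have hsend : ∀ i, ∑ j ∈ univ.filter (fun j => (i, j) ∈ M), g (.inl (i, j)) =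
      g (.inr (.inl i)) := fun i => by
    rw [sum_filter_of_ne fun j _ h => not_not.1 (mt (hoff i j) h)]
    have := hg (some (.inr (.inl i)))
    rw [netFlow_send] at this
    omega
  have hrecv : ∀ i, ∑ j ∈ univ.filter (fun j => (j, i) ∈ M), g (.inl (j, i)) =
      g (.inr (.inr (.inl i))) := fun i => by
    rw [sum_filter_of_ne fun j _ h => not_not.1 (mt (hoff j i) h)]
    have := hg (some (.inr (.inr i)))
    rw [netFlow_recv] at this
    omega
  have hhub : ∀ i, g (.inr (.inr (.inl i))) - g (.inr (.inl i)) = g (.inr (.inr (.inr i))) :=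
    fun i => by
      have := hg (some (.inl i))
      rw [netFlow_hub] at this
      omega
  refine ⟨fun ⟨i, j⟩ hm => ?_, fun i => ?_, fun i => ?_, fun i => ?_⟩
  · exact floor_le_and_le_ceil_trans (hedge _ hm) (by simpa [flow, hm] using hbox (.inl (i, j)))
  · rw [hsend]
    exact floor_le_and_le_ceil_trans (hout i) (hbox _)
  · rw [hrecv]
    exact floor_le_and_le_ceil_trans (hin i) (hbox _)
  · rw [hsend, hrecv, hhub]
    exact floor_le_and_le_ceil_trans (hbal i) (hbox _)

end RoundingNetwork

theorem rounding_integrality_general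
    (M : Finset (F × F))
    (XRel : F → F → ℝ)
    (c : F → F → ℝ)
    (Xt : F → F → ℝ) (hXt : RealFeasibleRounding M XRel Xt) :
    ∃ X : F → F → ℤ, FeasibleRounding M XRel X ∧
      (∑ m ∈ M, c m.1 m.2 * ((X m.1 m.2 : ℤ) : ℝ)) ≤ ∑ m ∈ M, c m.1 m.2 * Xt m.1 m.2 := by
  obtain ⟨g, hg, hbox, hcost⟩ :=
    exists_int_isCirculation_le (RoundingNetwork.cost M c) (RoundingNetwork.isCirculation_flow M Xt)
  refine ⟨fun i j => g (.inl (i, j)),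
    RoundingNetwork.feasibleRounding_of_isCirculation hXt hg hbox, ?_⟩
  rwa [RoundingNetwork.sum_cost_mul_intCast, RoundingNetwork.sum_cost_mul_flow] at hcost

/-- Integrality of the rounding problem: every real-feasible point of the rounding
polytope is weakly dominated (for any cost vector) by an integer feasible rounding. -/
theorem rounding_integrality
    (M : Finset (F × F)) (hloop : ∀ i : F, (i, i) ∉ M)
    (XRel : F → F → ℝ) (hXRel : ∀ m ∈ M, 0 ≤ XRel m.1 m.2)
    (c : F → F → ℝ)
    (Xt : F → F → ℝ) (hXt : RealFeasibleRounding M XRel Xt) :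
    ∃ X : F → F → ℤ, FeasibleRounding M XRel X ∧
      (∑ m ∈ M, c m.1 m.2 * ((X m.1 m.2 : ℤ) : ℝ)) ≤ ∑ m ∈ M, c m.1 m.2 * Xt m.1 m.2 :=
  rounding_integrality_general M XRel c Xt hXt

end
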